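/- arXiv:0706.2868 — 4 statements merged into one kernel-verified Lean document; each statement's English description precedes it below -/
import Mathlib

section
/- If vertical 1-cells f : a → b and g : c → d in a double category have horizontal companions f' and g' respectively, then for any vertical 1-cells i, m and horizontal 1-cells j, n of appropriate boundary, there is a bijection between 2-cells with boundary (top j, left f∘i, right m∘g, bottom n) and 2-cells with boundary (top g'∘j, left i, right m, bottom n∘f'). -/
universe u v w

/-- The data of a (strict) double category: objects, vertical 1-cells, horizontal
1-cells, 2-cells with their identities and horizontal/vertical pasting. -/
structure PreDouble where
  Obj : Type u
  Ver : Obj → Obj → Type v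
  Hor : Obj → Obj → Type v
  vId : ∀ a, Ver a a
  vComp : ∀ {a b c}, Ver a b → Ver b c → Ver a c
  hId : ∀ a, Hor a a
  hComp : ∀ {a b c}, Hor a b → Hor b c → Hor a c
  /-- `Cell t l r b` : 2-cells with top `t`, left `l`, right `r`, bottom `b`
  (in `Cat`, a natural transformation `r ∘ t ⟶ b ∘ l`). -/
  Cell : ∀ {a b c d}, Hor a c → Ver a b → Ver c d → Hor b d → Type w
  /-- the vertical identity 2-cell `1^f` on a vertical 1-cell -/
  vIdC : ∀ {a b} (f : Ver a b), Cell (hId a) f f (hId b)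
  /-- the horizontal identity 2-cell `1_f` on a horizontal 1-cell -/
  hIdC : ∀ {a c} (f : Hor a c), Cell f (vId a) (vId c) f
  /-- horizontal pasting `x ⊡ y` of 2-cells -/
  hPaste : ∀ {a b c d e e'} {t₁ : Hor a c} {t₂ : Hor c e} {l : Ver a b} {m : Ver c d}
      {r : Ver e e'} {b₁ : Hor b d} {b₂ : Hor d e'},
      Cell t₁ l m b₁ → Cell t₂ m r b₂ → Cell (hComp t₁ t₂) l r (hComp b₁ b₂)
  /-- vertical pasting `x ⊟ y` of 2-cells -/
  vPaste : ∀ {a b c d e e'} {t : Hor a b} {l₁ : Ver a c} {r₁ : Ver b d} {m : Hor c d}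
      {l₂ : Ver c e} {r₂ : Ver d e'} {bt : Hor e e'},
      Cell t l₁ r₁ m → Cell m l₂ r₂ bt → Cell t (vComp l₁ l₂) (vComp r₁ r₂) bt

/-- Transport a 2-cell along equalities of its four boundary 1-cells. -/
def PreDouble.cast (D : PreDouble) {a b c d : D.Obj}
    {t t' : D.Hor a c} {l l' : D.Ver a b} {r r' : D.Ver c d} {bt bt' : D.Hor b d}
    (et : t = t') (el : l = l') (er : r = r') (eb : bt = bt')
    (x : D.Cell t l r bt) : D.Cell t' l' r' bt' := by
  subst et; subst el; subst er; subst eb; exact x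

/-- A strict double category: the data of a `PreDouble` satisfying strict
category axioms in both directions, strict pasting axioms for 2-cells,
functoriality of identity 2-cells and the interchange law.  (Equivalently,
an internal category in `Cat`.) -/
structure StrictDoubleCategory extends PreDouble where
  vIdL : ∀ {a b} (f : Ver a b), vComp (vId a) f = f
  vIdR : ∀ {a b} (f : Ver a b), vComp f (vId b) = f
  vAssoc : ∀ {a b c d} (f : Ver a b) (g : Ver b c) (h : Ver c d),
      vComp (vComp f g) h = vComp f (vComp g h)
  hIdL : ∀ {a b} (f : Hor a b), hComp (hId a) f = f
  hIdR : ∀ {a b} (f : Hor a b), hComp f (hId b) = f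
  hAssoc : ∀ {a b c d} (f : Hor a b) (g : Hor b c) (h : Hor c d),
      hComp (hComp f g) h = hComp f (hComp g h)
  idC_id : ∀ {a : Obj}, vIdC (vId a) = hIdC (hId a)
  vIdC_comp : ∀ {a b c} (f : Ver a b) (g : Ver b c),
      vPaste (vIdC f) (vIdC g) = vIdC (vComp f g)
  hIdC_comp : ∀ {a b c} (f : Hor a b) (g : Hor b c),
      hPaste (hIdC f) (hIdC g) = hIdC (hComp f g)
  hPaste_idL : ∀ {a b c d} {t : Hor a c} {l : Ver a b} {r : Ver c d} {bt : Hor b d}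
      (x : Cell t l r bt),
      hPaste (vIdC l) x = toPreDouble.cast (hIdL t).symm rfl rfl (hIdL bt).symm x
  hPaste_idR : ∀ {a b c d} {t : Hor a c} {l : Ver a b} {r : Ver c d} {bt : Hor b d}
      (x : Cell t l r bt),
      hPaste x (vIdC r) = toPreDouble.cast (hIdR t).symm rfl rfl (hIdR bt).symm x
  vPaste_idT : ∀ {a b c d} {t : Hor a c} {l : Ver a b} {r : Ver c d} {bt : Hor b d}
      (x : Cell t l r bt),
      vPaste (hIdC t) x = toPreDouble.cast rfl (vIdL l).symm (vIdL r).symm rfl x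
  vPaste_idB : ∀ {a b c d} {t : Hor a c} {l : Ver a b} {r : Ver c d} {bt : Hor b d}
      (x : Cell t l r bt),
      vPaste x (hIdC bt) = toPreDouble.cast rfl (vIdR l).symm (vIdR r).symm rfl x
  hPaste_assoc : ∀ {a₀ b₀ a₁ b₁ a₂ b₂ a₃ b₃}
      {t₁ : Hor a₀ a₁} {t₂ : Hor a₁ a₂} {t₃ : Hor a₂ a₃}
      {l : Ver a₀ b₀} {m₁ : Ver a₁ b₁} {m₂ : Ver a₂ b₂} {r : Ver a₃ b₃}
      {u₁ : Hor b₀ b₁} {u₂ : Hor b₁ b₂} {u₃ : Hor b₂ b₃}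
      (x : Cell t₁ l m₁ u₁) (y : Cell t₂ m₁ m₂ u₂) (z : Cell t₃ m₂ r u₃),
      hPaste (hPaste x y) z =
        toPreDouble.cast (hAssoc t₁ t₂ t₃).symm rfl rfl (hAssoc u₁ u₂ u₃).symm
          (hPaste x (hPaste y z))
  vPaste_assoc : ∀ {a₀ b₀ a₁ b₁ a₂ b₂ a₃ b₃}
      {t₁ : Ver a₀ a₁} {t₂ : Ver a₁ a₂} {t₃ : Ver a₂ a₃}
      {l : Hor a₀ b₀} {m₁ : Hor a₁ b₁} {m₂ : Hor a₂ b₂} {r : Hor a₃ b₃}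
      {u₁ : Ver b₀ b₁} {u₂ : Ver b₁ b₂} {u₃ : Ver b₂ b₃}
      (x : Cell l t₁ u₁ m₁) (y : Cell m₁ t₂ u₂ m₂) (z : Cell m₂ t₃ u₃ r),
      vPaste (vPaste x y) z =
        toPreDouble.cast rfl (vAssoc t₁ t₂ t₃).symm (vAssoc u₁ u₂ u₃).symm rfl
          (vPaste x (vPaste y z))
  interchange : ∀ {a b c d e f g h i}
      {t₁ : Hor a b} {t₂ : Hor b c} {l₁ : Ver a d} {m₁ : Ver b e} {r₁ : Ver c f}
      {u₁ : Hor d e} {u₂ : Hor e f} {l₂ : Ver d g} {m₂ : Ver e h} {r₂ : Ver f i}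
      {w₁ : Hor g h} {w₂ : Hor h i}
      (x : Cell t₁ l₁ m₁ u₁) (y : Cell t₂ m₁ r₁ u₂)
      (z : Cell u₁ l₂ m₂ w₁) (w : Cell u₂ m₂ r₂ w₂),
      vPaste (hPaste x y) (hPaste z w) = hPaste (vPaste x z) (vPaste y w)

namespace StrictDoubleCategory

variable (D : StrictDoubleCategory)

/-- A companion pair: a vertical 1-cell `f` and a horizontal 1-cell `f'`
bound together by 2-cells `φ`, `ψ` satisfying `φ ⊟ ψ = 1^f` and `ψ ⊡ φ = 1_{f'}`. -/
structure Companion {a b : D.Obj} (f : D.Ver a b) (f' : D.Hor a b) where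
  φ : D.Cell f' f (D.vId b) (D.hId b)
  ψ : D.Cell (D.hId a) (D.vId a) f f'
  vtriangle : D.vPaste ψ φ =
    D.cast rfl (D.vIdL f).symm (D.vIdR f).symm rfl (D.vIdC f)
  htriangle : D.hPaste ψ φ =
    D.cast (D.hIdL f').symm rfl rfl (D.hIdR f').symm (D.hIdC f')

/-- A conjunction `f ⊣| g` : a vertical 1-cell `f : a → b` and a horizontal
1-cell `g : b → a` together with unit `η` and counit `ε` satisfying
`ε ⊡ η = 1_g` and `ε ⊟ η = 1^f`. -/
structure Conjunction {a b : D.Obj} (f : D.Ver a b) (g : D.Hor b a) where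
  η : D.Cell (D.hId a) f (D.vId a) g
  ε : D.Cell g (D.vId b) f (D.hId b)
  htriangle : D.hPaste ε η =
    D.cast (D.hIdR g).symm rfl rfl (D.hIdL g).symm (D.hIdC g)
  vtriangle : D.vPaste η ε =
    D.cast rfl (D.vIdR f).symm (D.vIdL f).symm rfl (D.vIdC f)

end StrictDoubleCategory

/-! Pasting with the cells of a companion pair moves a vertical 1-cell around a corner of a
2-cell: pasting `1^l ⊟ ψ_f` on the left turns a left edge `vComp l f` into the left edge `l`
and prefixes the bottom edge with `f'` (inverse: paste `φ_f ⊡ 1_bt` below), and dually pasting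
`φ_g ⊟ 1^r` on the right turns a right edge `vComp g r` into `r` and suffixes the top edge
with `g'`. By interchange each round trip is a pasting with `ψ ⊟ φ` or `ψ ⊡ φ`, which the
companion identities reduce to identity cells. The mate bijection is the composite of the two
moves, one for `f` and one for `g`.

Boundaries agree only up to the strict unit laws, so cells are compared with `HEq` and
transported with `cast`. -/

namespace StrictDoubleCategory

variable (D : StrictDoubleCategory)

attribute [local simp] vIdL vIdR hIdL hIdR

theorem cast_heq {a b c d : D.Obj} {t t' : D.Hor a c} {l l' : D.Ver a b}
    {r r' : D.Ver c d} {bt bt' : D.Hor b d}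
    (et : t = t') (el : l = l') (er : r = r') (eb : bt = bt') (x : D.Cell t l r bt) :
    D.cast et el er eb x ≍ x := by
  subst et el er eb; rfl

theorem hPaste_congr_heq {a b c d e e' : D.Obj}
    {t₁ t₁' : D.Hor a c} {t₂ t₂' : D.Hor c e} {l l' : D.Ver a b} {m m' : D.Ver c d}
    {r r' : D.Ver e e'} {b₁ b₁' : D.Hor b d} {b₂ b₂' : D.Hor d e'}
    {x : D.Cell t₁ l m b₁} {x' : D.Cell t₁' l' m' b₁'}
    {y : D.Cell t₂ m r b₂} {y' : D.Cell t₂' m' r' b₂'}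
    (hx : x ≍ x') (hy : y ≍ y')
    (ht₁ : t₁ = t₁' := by simp) (ht₂ : t₂ = t₂' := by simp)
    (hl : l = l' := by simp) (hm : m = m' := by simp) (hr : r = r' := by simp)
    (hb₁ : b₁ = b₁' := by simp) (hb₂ : b₂ = b₂' := by simp) :
    D.hPaste x y ≍ D.hPaste x' y' := by
  subst ht₁ ht₂ hl hm hr hb₁ hb₂ hx hy; rfl

theorem vPaste_congr_heq {a b c d e e' : D.Obj}
    {t t' : D.Hor a b} {l₁ l₁' : D.Ver a c} {r₁ r₁' : D.Ver b d} {m m' : D.Hor c d}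
    {l₂ l₂' : D.Ver c e} {r₂ r₂' : D.Ver d e'} {bt bt' : D.Hor e e'}
    {x : D.Cell t l₁ r₁ m} {x' : D.Cell t' l₁' r₁' m'}
    {y : D.Cell m l₂ r₂ bt} {y' : D.Cell m' l₂' r₂' bt'}
    (hx : x ≍ x') (hy : y ≍ y')
    (ht : t = t' := by simp) (hl₁ : l₁ = l₁' := by simp) (hr₁ : r₁ = r₁' := by simp)
    (hm : m = m' := by simp) (hl₂ : l₂ = l₂' := by simp) (hr₂ : r₂ = r₂' := by simp)
    (hbt : bt = bt' := by simp) :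
    D.vPaste x y ≍ D.vPaste x' y' := by
  subst ht hl₁ hr₁ hm hl₂ hr₂ hbt hx hy; rfl

section UnitLaws

variable {a b c d : D.Obj} {t : D.Hor a c} {l : D.Ver a b} {r : D.Ver c d} {bt : D.Hor b d}

theorem vIdC_hPaste_heq (x : D.Cell t l r bt) : D.hPaste (D.vIdC l) x ≍ x := by
  rw [hPaste_idL]; exact D.cast_heq _ _ _ _ x

theorem hPaste_vIdC_heq (x : D.Cell t l r bt) : D.hPaste x (D.vIdC r) ≍ x := by
  rw [hPaste_idR]; exact D.cast_heq _ _ _ _ x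

theorem hIdC_vPaste_heq (x : D.Cell t l r bt) : D.vPaste (D.hIdC t) x ≍ x := by
  rw [vPaste_idT]; exact D.cast_heq _ _ _ _ x

theorem vPaste_hIdC_heq (x : D.Cell t l r bt) : D.vPaste x (D.hIdC bt) ≍ x := by
  rw [vPaste_idB]; exact D.cast_heq _ _ _ _ x

end UnitLaws

theorem hPaste_assoc_heq {a₀ b₀ a₁ b₁ a₂ b₂ a₃ b₃ : D.Obj}
    {t₁ : D.Hor a₀ a₁} {t₂ : D.Hor a₁ a₂} {t₃ : D.Hor a₂ a₃}
    {l : D.Ver a₀ b₀} {m₁ : D.Ver a₁ b₁} {m₂ : D.Ver a₂ b₂} {r : D.Ver a₃ b₃}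
    {u₁ : D.Hor b₀ b₁} {u₂ : D.Hor b₁ b₂} {u₃ : D.Hor b₂ b₃}
    (x : D.Cell t₁ l m₁ u₁) (y : D.Cell t₂ m₁ m₂ u₂) (z : D.Cell t₃ m₂ r u₃) :
    D.hPaste (D.hPaste x y) z ≍ D.hPaste x (D.hPaste y z) := by
  rw [hPaste_assoc]; exact D.cast_heq _ _ _ _ _

theorem vPaste_assoc_heq {a₀ b₀ a₁ b₁ a₂ b₂ a₃ b₃ : D.Obj}
    {t₁ : D.Ver a₀ a₁} {t₂ : D.Ver a₁ a₂} {t₃ : D.Ver a₂ a₃}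
    {l : D.Hor a₀ b₀} {m₁ : D.Hor a₁ b₁} {m₂ : D.Hor a₂ b₂} {r : D.Hor a₃ b₃}
    {u₁ : D.Ver b₀ b₁} {u₂ : D.Ver b₁ b₂} {u₃ : D.Ver b₂ b₃}
    (x : D.Cell l t₁ u₁ m₁) (y : D.Cell m₁ t₂ u₂ m₂) (z : D.Cell m₂ t₃ u₃ r) :
    D.vPaste (D.vPaste x y) z ≍ D.vPaste x (D.vPaste y z) := by
  rw [vPaste_assoc]; exact D.cast_heq _ _ _ _ _

namespace Companion

variable {D} {a b : D.Obj} {f : D.Ver a b} {f' : D.Hor a b} (C : D.Companion f f')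

theorem vPaste_ψ_φ_heq : D.vPaste C.ψ C.φ ≍ D.vIdC f := by
  rw [C.vtriangle]; exact D.cast_heq _ _ _ _ _

theorem hPaste_ψ_φ_heq : D.hPaste C.ψ C.φ ≍ D.hIdC f' := by
  rw [C.htriangle]; exact D.cast_heq _ _ _ _ _

theorem vIdC_vPaste_ψ_vPaste_φ_heq {x : D.Obj} (l : D.Ver x a) :
    D.vPaste (D.vPaste (D.vIdC l) C.ψ) C.φ ≍ D.vIdC (D.vComp l f) :=
  (D.vPaste_assoc_heq _ _ _).trans <|
    (D.vPaste_congr_heq HEq.rfl C.vPaste_ψ_φ_heq).trans (heq_of_eq (D.vIdC_comp l f))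

theorem ψ_vPaste_φ_vPaste_vIdC_heq {y : D.Obj} (r : D.Ver b y) :
    D.vPaste C.ψ (D.vPaste C.φ (D.vIdC r)) ≍ D.vIdC (D.vComp f r) :=
  (D.vPaste_assoc_heq _ _ _).symm.trans <|
    (D.vPaste_congr_heq C.vPaste_ψ_φ_heq HEq.rfl).trans (heq_of_eq (D.vIdC_comp f r))

theorem hIdC_hPaste_ψ_hPaste_φ_heq {x : D.Obj} (t : D.Hor x a) :
    D.hPaste (D.hPaste (D.hIdC t) C.ψ) C.φ ≍ D.hIdC (D.hComp t f') :=
  (D.hPaste_assoc_heq _ _ _).trans <|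
    (D.hPaste_congr_heq HEq.rfl C.hPaste_ψ_φ_heq).trans (heq_of_eq (D.hIdC_comp t f'))

theorem ψ_hPaste_φ_hPaste_hIdC_heq {y : D.Obj} (bt : D.Hor b y) :
    D.hPaste C.ψ (D.hPaste C.φ (D.hIdC bt)) ≍ D.hIdC (D.hComp f' bt) :=
  (D.hPaste_assoc_heq _ _ _).symm.trans <|
    (D.hPaste_congr_heq C.hPaste_ψ_φ_heq HEq.rfl).trans (heq_of_eq (D.hIdC_comp f' bt))

variable {x y w : D.Obj}

def leftToBottomEquiv {t : D.Hor x y} {l : D.Ver x a} {r : D.Ver y w} {bt : D.Hor b w} :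
    D.Cell t (D.vComp l f) r bt ≃ D.Cell t l r (D.hComp f' bt) where
  toFun α := D.cast (D.hIdL t) (D.vIdR l) rfl rfl (D.hPaste (D.vPaste (D.vIdC l) C.ψ) α)
  invFun β := D.cast rfl rfl (D.vIdR r) (D.hIdL bt) (D.vPaste β (D.hPaste C.φ (D.hIdC bt)))
  left_inv α := eq_of_heq <|
    (D.cast_heq _ _ _ _ _).trans <|
    (D.vPaste_congr_heq (D.cast_heq _ _ _ _ _) HEq.rfl).trans <|
    (heq_of_eq (D.interchange _ _ _ _)).trans <|
    (D.hPaste_congr_heq (C.vIdC_vPaste_ψ_vPaste_φ_heq l) (D.vPaste_hIdC_heq α)).trans <|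
    D.vIdC_hPaste_heq α
  right_inv β := eq_of_heq <|
    (D.cast_heq _ _ _ _ _).trans <|
    (D.hPaste_congr_heq HEq.rfl (D.cast_heq _ _ _ _ _)).trans <|
    (heq_of_eq (D.interchange _ _ _ _).symm).trans <|
    (D.vPaste_congr_heq (D.vIdC_hPaste_heq β) (C.ψ_hPaste_φ_hPaste_hIdC_heq bt)).trans <|
    D.vPaste_hIdC_heq β

def rightToTopEquiv {t : D.Hor x a} {l : D.Ver x y} {r : D.Ver b w} {bt : D.Hor y w} :
    D.Cell t l (D.vComp f r) bt ≃ D.Cell (D.hComp t f') l r bt where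
  toFun α := D.cast rfl rfl (D.vIdL r) (D.hIdR bt) (D.hPaste α (D.vPaste C.φ (D.vIdC r)))
  invFun β := D.cast (D.hIdR t) (D.vIdL l) rfl rfl (D.vPaste (D.hPaste (D.hIdC t) C.ψ) β)
  left_inv α := eq_of_heq <|
    (D.cast_heq _ _ _ _ _).trans <|
    (D.vPaste_congr_heq HEq.rfl (D.cast_heq _ _ _ _ _)).trans <|
    (heq_of_eq (D.interchange _ _ _ _)).trans <|
    (D.hPaste_congr_heq (D.hIdC_vPaste_heq α) (C.ψ_vPaste_φ_vPaste_vIdC_heq r)).trans <|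
    D.hPaste_vIdC_heq α
  right_inv β := eq_of_heq <|
    (D.cast_heq _ _ _ _ _).trans <|
    (D.hPaste_congr_heq (D.cast_heq _ _ _ _ _) HEq.rfl).trans <|
    (heq_of_eq (D.interchange _ _ _ _).symm).trans <|
    (D.vPaste_congr_heq (C.hIdC_hPaste_ψ_hPaste_φ_heq t) (D.hPaste_vIdC_heq β)).trans <|
    D.hIdC_vPaste_heq β

end Companion

end StrictDoubleCategory

/-- Companion mates: if `f : a → b` and `g : c → d` have horizontal companions
`f'` and `g'`, then for all `i : x → a`, `m : d → z` vertical and `j : x → c`,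
`n : b → z` horizontal, 2-cells `(top j, left f∘i, right m∘g, bottom n)`
biject with 2-cells `(top g'∘j, left i, right m, bottom n∘f')`. -/
theorem companion_mate_bijection (D : StrictDoubleCategory)
    {a b c d x z : D.Obj}
    (f : D.Ver a b) (f' : D.Hor a b) (_ : D.Companion f f')
    (g : D.Ver c d) (g' : D.Hor c d) (_ : D.Companion g g')
    (i : D.Ver x a) (m : D.Ver d z) (j : D.Hor x c) (n : D.Hor b z) :
    Nonempty (D.Cell j (D.vComp i f) (D.vComp g m) n ≃
      D.Cell (D.hComp j g') i m (D.hComp f' n)) :=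
  ⟨‹D.Companion f f'›.leftToBottomEquiv.trans ‹D.Companion g g'›.rightToTopEquiv⟩
end

section
/- Suppose f ⊣| g and h ⊣| k are conjunctions in a strict double category, with f, h : a → b vertical 1-cells and g, k : b → a horizontal 1-cells. Then for any vertical 1-cells m, j and horizontal 1-cells i, n of appropriate boundary, there is a bijection between 2-cells with boundary (top i, left m∘h, right f∘j, bottom n) and 2-cells with boundary (top i∘k, left m, right j, bottom g∘n), given by pasting with the units and counits. -/
universe u v w

/-!
The mate bijection factors through `D.Cell (D.hComp k i) m (D.vComp j f) n`: the conjunction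
`h ⊣| k` slides `h` from the left edge onto the top edge as `k` (paste `ε ⊟ 1^m` on the left;
back by pasting `η ⊡ 1_i` on top), and independently `f ⊣| g` slides `f` from the right edge
onto the bottom edge as `g`. Each round trip is one interchange followed by a triangle identity
of the conjunction.
-/

namespace PreDouble

variable {D : PreDouble}

/-- Equality of squares is equality of boundaries plus `HEq` of cells, so it absorbs the
transports `D.cast` forced by the strict unit and associativity laws. -/
structure Square (D : PreDouble) where
  {a b c d : D.Obj}
  {t : D.Hor a c}
  {l : D.Ver a b}
  {r : D.Ver c d}
  {bt : D.Hor b d}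
  cell : D.Cell t l r bt

notation "⌞" x "⌟" => PreDouble.Square.mk x

theorem Square.mk_inj {a b c d : D.Obj} {t : D.Hor a c} {l : D.Ver a b} {r : D.Ver c d}
    {bt : D.Hor b d} {x y : D.Cell t l r bt} : ⌞x⌟ = ⌞y⌟ ↔ x = y :=
  ⟨fun h => eq_of_heq (Square.mk.inj h).2.2.2.2.2.2.2.2, congrArg _⟩

theorem Square.mk_cast {a b c d : D.Obj}
    {t t' : D.Hor a c} {l l' : D.Ver a b} {r r' : D.Ver c d} {bt bt' : D.Hor b d}
    (et : t = t') (el : l = l') (er : r = r') (eb : bt = bt') (x : D.Cell t l r bt) :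
    ⌞D.cast et el er eb x⌟ = ⌞x⌟ := by
  subst et el er eb; rfl

theorem Square.mk_hPaste_congr {a b c d e e' : D.Obj}
    {t₁ t₁' : D.Hor a c} {t₂ t₂' : D.Hor c e} {l l' : D.Ver a b} {m m' : D.Ver c d}
    {r r' : D.Ver e e'} {b₁ b₁' : D.Hor b d} {b₂ b₂' : D.Hor d e'}
    {x : D.Cell t₁ l m b₁} {x' : D.Cell t₁' l' m' b₁'}
    {y : D.Cell t₂ m r b₂} {y' : D.Cell t₂' m' r' b₂'}
    (hx : ⌞x⌟ = ⌞x'⌟) (hy : ⌞y⌟ = ⌞y'⌟) : ⌞D.hPaste x y⌟ = ⌞D.hPaste x' y'⌟ := by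
  obtain ⟨-, -, -, -, rfl, rfl, rfl, rfl, hxx'⟩ := Square.mk.inj hx
  obtain ⟨-, -, -, -, rfl, -, rfl, rfl, hyy'⟩ := Square.mk.inj hy
  cases hxx'; cases hyy'; rfl

theorem Square.mk_vPaste_congr {a b c d e e' : D.Obj}
    {t t' : D.Hor a b} {l₁ l₁' : D.Ver a c} {r₁ r₁' : D.Ver b d} {m m' : D.Hor c d}
    {l₂ l₂' : D.Ver c e} {r₂ r₂' : D.Ver d e'} {bt bt' : D.Hor e e'}
    {x : D.Cell t l₁ r₁ m} {x' : D.Cell t' l₁' r₁' m'}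
    {y : D.Cell m l₂ r₂ bt} {y' : D.Cell m' l₂' r₂' bt'}
    (hx : ⌞x⌟ = ⌞x'⌟) (hy : ⌞y⌟ = ⌞y'⌟) : ⌞D.vPaste x y⌟ = ⌞D.vPaste x' y'⌟ := by
  obtain ⟨-, -, -, -, rfl, rfl, rfl, rfl, hxx'⟩ := Square.mk.inj hx
  obtain ⟨-, -, -, -, -, rfl, rfl, rfl, hyy'⟩ := Square.mk.inj hy
  cases hxx'; cases hyy'; rfl

end PreDouble

namespace StrictDoubleCategory

open PreDouble

variable {D : StrictDoubleCategory}

section Unitality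

variable {a b c d : D.Obj} {t : D.Hor a c} {l : D.Ver a b} {r : D.Ver c d} {bt : D.Hor b d}

theorem mk_hPaste_vIdC_left (x : D.Cell t l r bt) : ⌞D.hPaste (D.vIdC l) x⌟ = ⌞x⌟ := by
  rw [D.hPaste_idL, Square.mk_cast]

theorem mk_hPaste_vIdC_right (x : D.Cell t l r bt) : ⌞D.hPaste x (D.vIdC r)⌟ = ⌞x⌟ := by
  rw [D.hPaste_idR, Square.mk_cast]

theorem mk_vPaste_hIdC_top (x : D.Cell t l r bt) : ⌞D.vPaste (D.hIdC t) x⌟ = ⌞x⌟ := by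
  rw [D.vPaste_idT, Square.mk_cast]

theorem mk_vPaste_hIdC_bottom (x : D.Cell t l r bt) : ⌞D.vPaste x (D.hIdC bt)⌟ = ⌞x⌟ := by
  rw [D.vPaste_idB, Square.mk_cast]

end Unitality

theorem mk_hPaste_assoc {a₀ b₀ a₁ b₁ a₂ b₂ a₃ b₃ : D.Obj}
    {t₁ : D.Hor a₀ a₁} {t₂ : D.Hor a₁ a₂} {t₃ : D.Hor a₂ a₃}
    {l : D.Ver a₀ b₀} {m₁ : D.Ver a₁ b₁} {m₂ : D.Ver a₂ b₂} {r : D.Ver a₃ b₃}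
    {u₁ : D.Hor b₀ b₁} {u₂ : D.Hor b₁ b₂} {u₃ : D.Hor b₂ b₃}
    (x : D.Cell t₁ l m₁ u₁) (y : D.Cell t₂ m₁ m₂ u₂) (z : D.Cell t₃ m₂ r u₃) :
    ⌞D.hPaste (D.hPaste x y) z⌟ = ⌞D.hPaste x (D.hPaste y z)⌟ := by
  rw [D.hPaste_assoc, Square.mk_cast]

theorem mk_vPaste_assoc {a₀ b₀ a₁ b₁ a₂ b₂ a₃ b₃ : D.Obj}
    {t₁ : D.Ver a₀ a₁} {t₂ : D.Ver a₁ a₂} {t₃ : D.Ver a₂ a₃}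
    {l : D.Hor a₀ b₀} {m₁ : D.Hor a₁ b₁} {m₂ : D.Hor a₂ b₂} {r : D.Hor a₃ b₃}
    {u₁ : D.Ver b₀ b₁} {u₂ : D.Ver b₁ b₂} {u₃ : D.Ver b₂ b₃}
    (x : D.Cell l t₁ u₁ m₁) (y : D.Cell m₁ t₂ u₂ m₂) (z : D.Cell m₂ t₃ u₃ r) :
    ⌞D.vPaste (D.vPaste x y) z⌟ = ⌞D.vPaste x (D.vPaste y z)⌟ := by
  rw [D.vPaste_assoc, Square.mk_cast]

namespace Conjunction

variable {a b : D.Obj} {f : D.Ver a b} {g : D.Hor b a}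

theorem mk_hPaste_ε_η (cj : D.Conjunction f g) : ⌞D.hPaste cj.ε cj.η⌟ = ⌞D.hIdC g⌟ := by
  rw [cj.htriangle, Square.mk_cast]

theorem mk_vPaste_η_ε (cj : D.Conjunction f g) : ⌞D.vPaste cj.η cj.ε⌟ = ⌞D.vIdC f⌟ := by
  rw [cj.vtriangle, Square.mk_cast]

theorem mk_vPaste_η_vPaste_ε_vIdC (cj : D.Conjunction f g) {y : D.Obj} (l : D.Ver b y) :
    ⌞D.vPaste cj.η (D.vPaste cj.ε (D.vIdC l))⌟ = ⌞D.vIdC (D.vComp f l)⌟ :=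
  calc _ = ⌞D.vPaste (D.vPaste cj.η cj.ε) (D.vIdC l)⌟ := (mk_vPaste_assoc ..).symm
    _ = ⌞D.vPaste (D.vIdC f) (D.vIdC l)⌟ := Square.mk_vPaste_congr cj.mk_vPaste_η_ε rfl
    _ = _ := by rw [D.vIdC_comp]

theorem mk_vPaste_vPaste_vIdC_η_ε (cj : D.Conjunction f g) {x : D.Obj} (r : D.Ver x a) :
    ⌞D.vPaste (D.vPaste (D.vIdC r) cj.η) cj.ε⌟ = ⌞D.vIdC (D.vComp r f)⌟ :=
  calc _ = ⌞D.vPaste (D.vIdC r) (D.vPaste cj.η cj.ε)⌟ := mk_vPaste_assoc ..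
    _ = ⌞D.vPaste (D.vIdC r) (D.vIdC f)⌟ := Square.mk_vPaste_congr rfl cj.mk_vPaste_η_ε
    _ = _ := by rw [D.vIdC_comp]

theorem mk_hPaste_ε_hPaste_η_hIdC (cj : D.Conjunction f g) {c : D.Obj} (t : D.Hor a c) :
    ⌞D.hPaste cj.ε (D.hPaste cj.η (D.hIdC t))⌟ = ⌞D.hIdC (D.hComp g t)⌟ :=
  calc _ = ⌞D.hPaste (D.hPaste cj.ε cj.η) (D.hIdC t)⌟ := (mk_hPaste_assoc ..).symm
    _ = ⌞D.hPaste (D.hIdC g) (D.hIdC t)⌟ := Square.mk_hPaste_congr cj.mk_hPaste_ε_η rfl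
    _ = _ := by rw [D.hIdC_comp]

theorem mk_hPaste_hPaste_hIdC_ε_η (cj : D.Conjunction f g) {y : D.Obj} (bt : D.Hor y b) :
    ⌞D.hPaste (D.hPaste (D.hIdC bt) cj.ε) cj.η⌟ = ⌞D.hIdC (D.hComp bt g)⌟ :=
  calc _ = ⌞D.hPaste (D.hIdC bt) (D.hPaste cj.ε cj.η)⌟ := mk_hPaste_assoc ..
    _ = ⌞D.hPaste (D.hIdC bt) (D.hIdC g)⌟ := Square.mk_hPaste_congr rfl cj.mk_hPaste_ε_η
    _ = _ := by rw [D.hIdC_comp]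

def transferLeft (cj : D.Conjunction f g) {c y d : D.Obj} {t : D.Hor a c} {l : D.Ver b y}
    {r : D.Ver c d} {bt : D.Hor y d} :
    D.Cell t (D.vComp f l) r bt ≃ D.Cell (D.hComp g t) l r bt where
  toFun x := D.cast rfl (D.vIdL l) rfl (D.hIdL bt) (D.hPaste (D.vPaste cj.ε (D.vIdC l)) x)
  invFun z := D.cast (D.hIdL t) rfl (D.vIdL r) rfl (D.vPaste (D.hPaste cj.η (D.hIdC t)) z)
  left_inv x := Square.mk_inj.mp <|
    calc _ = ⌞D.vPaste (D.hPaste cj.η (D.hIdC t)) (D.hPaste (D.vPaste cj.ε (D.vIdC l)) x)⌟ :=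
          (Square.mk_cast ..).trans (Square.mk_vPaste_congr rfl (Square.mk_cast ..))
      _ = ⌞D.hPaste (D.vPaste cj.η (D.vPaste cj.ε (D.vIdC l))) (D.vPaste (D.hIdC t) x)⌟ := by
          rw [D.interchange]
      _ = ⌞D.hPaste (D.vIdC (D.vComp f l)) x⌟ :=
          Square.mk_hPaste_congr (cj.mk_vPaste_η_vPaste_ε_vIdC l) (mk_vPaste_hIdC_top x)
      _ = ⌞x⌟ := mk_hPaste_vIdC_left x
  right_inv z := Square.mk_inj.mp <|
    calc _ = ⌞D.hPaste (D.vPaste cj.ε (D.vIdC l)) (D.vPaste (D.hPaste cj.η (D.hIdC t)) z)⌟ :=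
          (Square.mk_cast ..).trans (Square.mk_hPaste_congr rfl (Square.mk_cast ..))
      _ = ⌞D.vPaste (D.hPaste cj.ε (D.hPaste cj.η (D.hIdC t))) (D.hPaste (D.vIdC l) z)⌟ := by
          rw [D.interchange]
      _ = ⌞D.vPaste (D.hIdC (D.hComp g t)) z⌟ :=
          Square.mk_vPaste_congr (cj.mk_hPaste_ε_hPaste_η_hIdC t) (mk_hPaste_vIdC_left z)
      _ = ⌞z⌟ := mk_vPaste_hIdC_top z

def transferRight (cj : D.Conjunction f g) {x y c : D.Obj} {t : D.Hor x c} {l : D.Ver x y}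
    {r : D.Ver c a} {bt : D.Hor y b} :
    D.Cell t l (D.vComp r f) bt ≃ D.Cell t l r (D.hComp bt g) where
  toFun u := D.cast (D.hIdR t) rfl (D.vIdR r) rfl (D.hPaste u (D.vPaste (D.vIdC r) cj.η))
  invFun z := D.cast rfl (D.vIdR l) rfl (D.hIdR bt) (D.vPaste z (D.hPaste (D.hIdC bt) cj.ε))
  left_inv u := Square.mk_inj.mp <|
    calc _ = ⌞D.vPaste (D.hPaste u (D.vPaste (D.vIdC r) cj.η)) (D.hPaste (D.hIdC bt) cj.ε)⌟ :=
          (Square.mk_cast ..).trans (Square.mk_vPaste_congr (Square.mk_cast ..) rfl)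
      _ = ⌞D.hPaste (D.vPaste u (D.hIdC bt)) (D.vPaste (D.vPaste (D.vIdC r) cj.η) cj.ε)⌟ := by
          rw [D.interchange]
      _ = ⌞D.hPaste u (D.vIdC (D.vComp r f))⌟ :=
          Square.mk_hPaste_congr (mk_vPaste_hIdC_bottom u) (cj.mk_vPaste_vPaste_vIdC_η_ε r)
      _ = ⌞u⌟ := mk_hPaste_vIdC_right u
  right_inv z := Square.mk_inj.mp <|
    calc _ = ⌞D.hPaste (D.vPaste z (D.hPaste (D.hIdC bt) cj.ε)) (D.vPaste (D.vIdC r) cj.η)⌟ :=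
          (Square.mk_cast ..).trans (Square.mk_hPaste_congr (Square.mk_cast ..) rfl)
      _ = ⌞D.vPaste (D.hPaste z (D.vIdC r)) (D.hPaste (D.hPaste (D.hIdC bt) cj.ε) cj.η)⌟ := by
          rw [D.interchange]
      _ = ⌞D.vPaste z (D.hIdC (D.hComp bt g))⌟ :=
          Square.mk_vPaste_congr (mk_hPaste_vIdC_right z) (cj.mk_hPaste_hPaste_hIdC_ε_η bt)
      _ = ⌞z⌟ := mk_vPaste_hIdC_bottom z

end Conjunction

end StrictDoubleCategory

/-- Conjunction mates: if `f ⊣| g` and `h ⊣| k` with `f, h : a → b` vertical and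
`g, k : b → a` horizontal, then for all vertical `m : b → y`, `j : c → a` and
horizontal `i : a → c`, `n : y → b`, 2-cells `(top i, left m∘h, right f∘j, bottom n)`
biject with 2-cells `(top i∘k, left m, right j, bottom g∘n)` (via pasting with the
units and counits). -/
theorem conjunction_mate_bijection (D : StrictDoubleCategory) {a b y c : D.Obj}
    (f h : D.Ver a b) (g k : D.Hor b a)
    (_ : D.Conjunction f g) (_ : D.Conjunction h k)
    (m : D.Ver b y) (j : D.Ver c a) (i : D.Hor a c) (n : D.Hor y b) :
    Nonempty (D.Cell i (D.vComp h m) (D.vComp j f) n ≃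
      D.Cell (D.hComp k i) m j (D.hComp n g)) :=
  ⟨‹D.Conjunction h k›.transferLeft.trans ‹D.Conjunction f g›.transferRight⟩
end

section
/- A conjunction in the double category MonCat is precisely a doctrinal adjunction: given an adjunction F ⊣ G between monoidal categories where F is oplax monoidal and G is lax monoidal, the adjunction unit and counit are a conjunction unit and counit in MonCat (i.e., are 2-cells of MonCat) if and only if the oplax structure maps of F are the mates of the lax structure maps of G under the adjunction. -/
open CategoryTheory MonoidalCategory Functor

/-!
Under the hom-set bijection of `F ⊣ G`, compatibility of the unit with `δ` and `η` says
literally that `δ` and `η` are the mates of `μ` and `ε`. Compatibility of the unit alone,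
together with the triangle identities, already makes the adjunction monoidal
(`Adjunction.IsMonoidal`), and compatibility of the counit follows from that.
-/

namespace CategoryTheory.Adjunction

open Functor.LaxMonoidal Functor.OplaxMonoidal

variable {A B : Type*} [Category A] [Category B] [MonoidalCategory A] [MonoidalCategory B]
  {F : A ⥤ B} {G : B ⥤ A} [F.OplaxMonoidal] [G.LaxMonoidal] (adj : F ⊣ G)

lemma unit_app_tensor_comp_map_δ_iff (x y : A) :
    adj.unit.app (x ⊗ y) ≫ G.map (δ F x y) = (adj.unit.app x ⊗ₘ adj.unit.app y) ≫ μ G _ _ ↔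
      δ F x y = F.map (adj.unit.app x ⊗ₘ adj.unit.app y) ≫ F.map (μ G _ _) ≫
        adj.counit.app (F.obj x ⊗ F.obj y) := by
  rw [← F.map_comp_assoc]
  exact adj.unit_comp_map_eq_iff _ _

lemma unit_app_unit_comp_map_η_iff :
    adj.unit.app (𝟙_ A) ≫ G.map (η F) = ε G ↔ η F = F.map (ε G) ≫ adj.counit.app (𝟙_ B) :=
  adj.unit_comp_map_eq_iff _ _

lemma isMonoidal_of_unit_compat
    (hμ : ∀ x y : A, adj.unit.app (x ⊗ y) ≫ G.map (δ F x y) =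
      (adj.unit.app x ⊗ₘ adj.unit.app y) ≫ μ G _ _)
    (hε : adj.unit.app (𝟙_ A) ≫ G.map (η F) = ε G) :
    adj.IsMonoidal where
  leftAdjoint_ε := hε.symm
  leftAdjoint_μ x y := by
    rw [G.map_comp, reassoc_of% hμ, ← μ_natural, tensorHom_comp_tensorHom_assoc,
      right_triangle_components, right_triangle_components, id_tensorHom_id, Category.id_comp]
    rfl

end CategoryTheory.Adjunction

/-- Doctrinal adjunction: given an adjunction `F ⊣ G` between monoidal
categories, with `F` oplax monoidal and `G` lax monoidal, the unit and counit
are 2-cells of the double category `MonCat` (i.e. are compatible with the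
lax/oplax structure maps) if and only if the oplax structure maps of `F` are
the mates of the lax structure maps of `G` under the adjunction.  Thus a
conjunction in `MonCat` is precisely a doctrinal adjunction. -/
theorem doctrinal_adjunction {A : Type u₁} {B : Type u₂}
    [Category.{v₁} A] [Category.{v₂} B]
    [MonoidalCategory A] [MonoidalCategory B]
    (F : A ⥤ B) (G : B ⥤ A) [F.OplaxMonoidal] [G.LaxMonoidal]
    (adj : F ⊣ G) :
    ( -- the unit is a 2-cell of `MonCat`
      (∀ x y : A,
        adj.unit.app (x ⊗ y) ≫ G.map (OplaxMonoidal.δ F x y) =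
          (adj.unit.app x ⊗ₘ adj.unit.app y) ≫
            LaxMonoidal.μ G (F.obj x) (F.obj y)) ∧
      (adj.unit.app (𝟙_ A) ≫ G.map (OplaxMonoidal.η F) = LaxMonoidal.ε G) ∧
      -- the counit is a 2-cell of `MonCat`
      (∀ x y : B,
        F.map (LaxMonoidal.μ G x y) ≫ adj.counit.app (x ⊗ y) =
          OplaxMonoidal.δ F (G.obj x) (G.obj y) ≫
            (adj.counit.app x ⊗ₘ adj.counit.app y)) ∧
      (F.map (LaxMonoidal.ε G) ≫ adj.counit.app (𝟙_ B) = OplaxMonoidal.η F) )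
    ↔
    ( -- the oplax structure maps of `F` are the mates of the lax structure maps of `G`
      (∀ x y : A,
        OplaxMonoidal.δ F x y =
          F.map (adj.unit.app x ⊗ₘ adj.unit.app y) ≫
            F.map (LaxMonoidal.μ G (F.obj x) (F.obj y)) ≫
              adj.counit.app (F.obj x ⊗ F.obj y)) ∧
      (OplaxMonoidal.η F = F.map (LaxMonoidal.ε G) ≫ adj.counit.app (𝟙_ B)) ) := by
  constructor
  · rintro ⟨hμ, hε, -, -⟩
    exact ⟨fun x y ↦ (adj.unit_app_tensor_comp_map_δ_iff x y).1 (hμ x y),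
      adj.unit_app_unit_comp_map_η_iff.1 hε⟩
  · rintro ⟨hδ, hη⟩
    have hμ x y := (adj.unit_app_tensor_comp_map_δ_iff x y).2 (hδ x y)
    have hε := adj.unit_app_unit_comp_map_η_iff.2 hη
    have := adj.isMonoidal_of_unit_compat hμ hε
    exact ⟨hμ, hε, adj.map_μ_comp_counit_app_tensor, adj.map_ε_comp_counit_app_unit⟩
end

section
/- Let F : C ⇄ D : G be an adjunction between model categories in which F preserves cofibrant objects and weak equivalences between cofibrant objects, and G preserves fibrant objects and weak equivalences between fibrant objects. Then the left derived functor LF : Ho(C) → Ho(D) is left adjoint to the right derived functor RG : Ho(D) → Ho(C). -/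
open CategoryTheory

universe v u

/-- The homotopical data of a model category relevant to derived functors:
weak equivalences (containing identities and satisfying two-out-of-three),
cofibrant and fibrant objects, and functorial cofibrant and fibrant
replacements `q : Q ⟶ 𝟭` and `r : 𝟭 ⟶ R`. -/
structure ModelData (C : Type u) [Category.{v} C] where
  W : MorphismProperty C
  containsIdentities : W.ContainsIdentities
  twoOutOfThree : W.HasTwoOutOfThreeProperty
  Cofibrant : C → Prop
  Fibrant : C → Prop
  Q : C ⥤ C
  q : Q ⟶ 𝟭 C
  R : C ⥤ C
  r : 𝟭 C ⟶ R
  cofibrant_Q : ∀ X, Cofibrant (Q.obj X)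
  fibrant_R : ∀ X, Fibrant (R.obj X)
  W_q : ∀ X, W (q.app X)
  W_r : ∀ X, W (r.app X)

variable {C : Type u} [Category.{v} C] {D : Type u} [Category.{v} D]

/-- `F` preserves cofibrant objects and weak equivalences between cofibrant
objects. -/
def PreservesCofibrant (M : ModelData C) (N : ModelData D) (F : C ⥤ D) : Prop :=
  (∀ X, M.Cofibrant X → N.Cofibrant (F.obj X)) ∧
    (∀ ⦃X Y : C⦄ (f : X ⟶ Y), M.Cofibrant X → M.Cofibrant Y → M.W f →
      N.W (F.map f))

/-- `F` preserves fibrant objects and weak equivalences between fibrant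
objects. -/
def PreservesFibrant (M : ModelData C) (N : ModelData D) (F : C ⥤ D) : Prop :=
  (∀ X, M.Fibrant X → N.Fibrant (F.obj X)) ∧
    (∀ ⦃X Y : C⦄ (f : X ⟶ Y), M.Fibrant X → M.Fibrant Y → M.W f →
      N.W (F.map f))

/-!
Composing the unit and counit of `F ⊣ G` with the replacements gives natural maps
`Q X ⟶ G (R (F (Q X)))` and `F (Q (G (R Y))) ⟶ R Y`; since `q` and `r` become invertible in the
homotopy categories, these descend to a unit `𝟭 ⟶ LF ⋙ RG` and a counit `RG ⋙ LF ⟶ 𝟭`.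
Their triangle identities follow from those of `F ⊣ G`, except that the two maps
`F (Q (q X)), F (q (Q X)) : F (Q (Q X)) ⟶ F (Q X)` have to agree in `Ho(D)`. They do: both are
images of weak equivalences between cofibrant objects, hence invertible in `Ho(D)`, and the
naturality squares of `q` at `Q (q X)` and `q (Q X)`, together with the image under `Q` of the
one at `q X`, can then be cancelled down to the required equation. Dually for `R` and `G`.
-/

open Functor

namespace CategoryTheory

variable {C₁ D₁ : Type*} [Category* C₁] [Category* D₁]

lemma NatTrans.map_map_app_eq_map_app_obj {Q : C₁ ⥤ C₁} (q : Q ⟶ 𝟭 C₁) (H : C₁ ⥤ D₁)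
    (X : C₁) [IsIso (H.map (Q.map (q.app X)))] [∀ Y, IsIso (H.map (q.app (Q.obj Y)))] :
    H.map (Q.map (q.app X)) = H.map (q.app (Q.obj X)) := by
  have nat {Y Z : C₁} (f : Y ⟶ Z) :
      H.map (Q.map f) ≫ H.map (q.app Z) = H.map (q.app Y) ≫ H.map f := by
    rw [← H.map_comp, ← H.map_comp]
    exact congrArg H.map (q.naturality f)
  have hQQ : H.map (Q.map (Q.map (q.app X))) = H.map (Q.map (q.app (Q.obj X))) := by
    have h := congrArg H.map (Q.congr_map (q.naturality (q.app X)))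
    simp only [Functor.map_comp] at h
    exact (cancel_mono (H.map (Q.map (q.app X)))).1 h
  have hQq : H.map (Q.map (q.app (Q.obj X))) = H.map (q.app (Q.obj (Q.obj X))) :=
    (cancel_mono (H.map (q.app (Q.obj X)))).1 (nat (q.app (Q.obj X)))
  have h := nat (Q.map (q.app X))
  rw [hQQ, hQq] at h
  exact ((cancel_epi (H.map (q.app (Q.obj (Q.obj X))))).1 h).symm

lemma NatTrans.map_map_app_eq_map_app_obj' {R : C₁ ⥤ C₁} (r : 𝟭 C₁ ⟶ R) (H : C₁ ⥤ D₁)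
    (X : C₁) [IsIso (H.map (R.map (r.app X)))] [∀ Y, IsIso (H.map (r.app (R.obj Y)))] :
    H.map (R.map (r.app X)) = H.map (r.app (R.obj X)) :=
  have : IsIso (H.op.map (R.op.map ((NatTrans.op r).app (Opposite.op X)))) :=
    inferInstanceAs (IsIso (H.map (R.map (r.app X))).op)
  have (Y : C₁ᵒᵖ) : IsIso (H.op.map ((NatTrans.op r).app (R.op.obj Y))) :=
    inferInstanceAs (IsIso (H.map (r.app (R.obj Y.unop))).op)
  Quiver.Hom.op_inj <|
    NatTrans.map_map_app_eq_map_app_obj (NatTrans.op r : R.op ⟶ 𝟭 C₁ᵒᵖ) H.op (Opposite.op X)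

@[simps!]
noncomputable def Localization.isoOfNatTrans {E : Type*} [Category* E] (L : C₁ ⥤ D₁)
    (W : MorphismProperty C₁) [L.IsLocalization W] {F₁ F₂ : E ⥤ C₁} (τ : F₁ ⟶ F₂)
    (hτ : ∀ X, W (τ.app X)) : F₁ ⋙ L ≅ F₂ ⋙ L :=
  NatIso.ofComponents (fun X => Localization.isoOfHom L W (τ.app X) (hτ X))
    (fun f => (whiskerRight τ L).naturality f)

namespace Adjunction

variable {C₂ D₂ : Type*} [Category* C₂] [Category* D₂] {F : C₁ ⥤ C₂} {G : C₂ ⥤ C₁} (adj : F ⊣ G)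
  {Q : C₁ ⥤ C₁} (q : Q ⟶ 𝟭 C₁) {R : C₂ ⥤ C₂} (r : 𝟭 C₂ ⟶ R)

def replacedUnit : 𝟭 C₁ ⟶ F ⋙ R ⋙ G := adj.unit ≫ whiskerLeft F (whiskerRight r G)

def replacedCounit : G ⋙ Q ⋙ F ⟶ 𝟭 C₂ := whiskerLeft G (whiskerRight q F) ≫ adj.counit

@[simp]
lemma replacedUnit_app (X : C₁) :
    (adj.replacedUnit r).app X = adj.unit.app X ≫ G.map (r.app (F.obj X)) := rfl

@[simp]
lemma replacedCounit_app (Y : C₂) :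
    (adj.replacedCounit q).app Y = F.map (q.app (G.obj Y)) ≫ adj.counit.app Y := rfl

lemma map_map_replacedUnit_app_comp_replacedCounit_app (X : C₁) :
    F.map (Q.map ((adj.replacedUnit r).app X)) ≫ (adj.replacedCounit q).app (R.obj (F.obj X)) =
      F.map (q.app X) ≫ r.app (F.obj X) := by
  simp [← F.map_comp_assoc]

lemma replacedUnit_app_comp_map_map_replacedCounit_app (Y : C₂) :
    (adj.replacedUnit r).app (Q.obj (G.obj Y)) ≫ G.map (R.map ((adj.replacedCounit q).app Y)) =
      q.app (G.obj Y) ≫ G.map (r.app Y) := by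
  rw [replacedUnit_app, replacedCounit_app, Category.assoc, ← G.map_comp, ← r.naturality]
  simp

variable {L₁ : C₁ ⥤ D₁} (W₁ : MorphismProperty C₁) [L₁.IsLocalization W₁]
  {L₂ : C₂ ⥤ D₂} (W₂ : MorphismProperty C₂) [L₂.IsLocalization W₂]
  {LF : D₁ ⥤ D₂} {RG : D₂ ⥤ D₁} (eL : L₁ ⋙ LF ≅ (Q ⋙ F) ⋙ L₂) (eR : L₂ ⋙ RG ≅ (R ⋙ G) ⋙ L₁)
  (hq : ∀ X, W₁ (q.app X)) (hr : ∀ Y, W₂ (r.app Y))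

noncomputable def derivedUnit : 𝟭 D₁ ⟶ LF ⋙ RG :=
  (Localization.fullyFaithfulWhiskeringLeft L₁ W₁ D₁).preimage
    ((Localization.isoOfNatTrans L₁ W₁ q hq).inv ≫
      whiskerRight (whiskerLeft Q (adj.replacedUnit r)) L₁ ≫
      whiskerLeft (Q ⋙ F) eR.inv ≫ whiskerRight eL.inv RG)

noncomputable def derivedCounit : RG ⋙ LF ⟶ 𝟭 D₂ :=
  (Localization.fullyFaithfulWhiskeringLeft L₂ W₂ D₂).preimage
    (whiskerRight eR.hom LF ≫ whiskerLeft (R ⋙ G) eL.hom ≫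
      whiskerRight (whiskerLeft R (adj.replacedCounit q)) L₂ ≫
      (Localization.isoOfNatTrans L₂ W₂ r hr).inv)

lemma derivedUnit_app (X : C₁) :
    (adj.derivedUnit q r W₁ eL eR hq).app (L₁.obj X) =
      (Localization.isoOfHom L₁ W₁ (q.app X) (hq X)).inv ≫
        L₁.map ((adj.replacedUnit r).app (Q.obj X)) ≫
        eR.inv.app (F.obj (Q.obj X)) ≫ RG.map (eL.inv.app X) :=
  (NatTrans.congr_app
    ((Localization.fullyFaithfulWhiskeringLeft L₁ W₁ D₁).map_preimage _) X).trans (by simp)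

lemma derivedCounit_app (Y : C₂) :
    (adj.derivedCounit q r W₂ eL eR hr).app (L₂.obj Y) =
      LF.map (eR.hom.app Y) ≫ eL.hom.app (G.obj (R.obj Y)) ≫
        L₂.map ((adj.replacedCounit q).app (R.obj Y)) ≫
        (Localization.isoOfHom L₂ W₂ (r.app Y) (hr Y)).inv :=
  (NatTrans.congr_app
    ((Localization.fullyFaithfulWhiskeringLeft L₂ W₂ D₂).map_preimage _) Y).trans (by simp)

lemma map_derivedUnit_app_comp_derivedCounit_app
    (hQ : ∀ X, L₂.map (F.map (Q.map (q.app X))) = L₂.map (F.map (q.app (Q.obj X)))) (X : C₁) :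
    LF.map ((adj.derivedUnit q r W₁ eL eR hq).app (L₁.obj X)) ≫
      (adj.derivedCounit q r W₂ eL eR hr).app (LF.obj (L₁.obj X)) = 𝟙 _ := by
  have nat {A B : C₁} (f : A ⟶ B) :
      LF.map (L₁.map f) ≫ eL.hom.app B = eL.hom.app A ≫ L₂.map (F.map (Q.map f)) :=
    eL.hom.naturality f
  have h := (adj.derivedCounit q r W₂ eL eR hr).naturality (eL.hom.app X)
  dsimp at h
  rw [← cancel_mono (eL.hom.app X), Category.assoc, ← h, derivedUnit_app, derivedCounit_app]
  simp only [comp_obj, id_obj, map_comp, cancelIso, Category.assoc]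
  rw [reassoc_of% nat, ← L₂.map_comp_assoc, map_map_replacedUnit_app_comp_replacedCounit_app,
    L₂.map_comp_assoc, Localization.isoOfHom_hom_inv_id, Category.comp_id, ← hQ, ← nat,
    ← LF.map_comp_assoc]
  simp

lemma derivedUnit_app_comp_map_derivedCounit_app
    (hR : ∀ Y, L₁.map (G.map (R.map (r.app Y))) = L₁.map (G.map (r.app (R.obj Y)))) (Y : C₂) :
    (adj.derivedUnit q r W₁ eL eR hq).app (RG.obj (L₂.obj Y)) ≫
      RG.map ((adj.derivedCounit q r W₂ eL eR hr).app (L₂.obj Y)) = 𝟙 _ := by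
  have nat {A B : C₂} (f : A ⟶ B) :
      eR.inv.app A ≫ RG.map (L₂.map f) = L₁.map (G.map (R.map f)) ≫ eR.inv.app B :=
    (eR.inv.naturality f).symm
  have h := (adj.derivedUnit q r W₁ eL eR hq).naturality (eR.inv.app Y)
  dsimp at h
  rw [← cancel_epi (eR.inv.app Y), reassoc_of% h, derivedUnit_app, derivedCounit_app]
  simp only [id_obj, comp_obj, map_comp, Category.assoc, cancelIso]
  rw [reassoc_of% nat, ← L₁.map_comp_assoc, replacedUnit_app_comp_map_map_replacedCounit_app,
    L₁.map_comp_assoc, ← hR, ← reassoc_of% nat, ← RG.map_comp]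
  simp

noncomputable def derivedOfReplacement
    (hQ : ∀ X, L₂.map (F.map (Q.map (q.app X))) = L₂.map (F.map (q.app (Q.obj X))))
    (hR : ∀ Y, L₁.map (G.map (R.map (r.app Y))) = L₁.map (G.map (r.app (R.obj Y)))) :
    LF ⊣ RG :=
  Adjunction.mkOfUnitCounit
    { unit := adj.derivedUnit q r W₁ eL eR hq
      counit := adj.derivedCounit q r W₂ eL eR hr
      left_triangle := Localization.natTrans_ext L₁ W₁ fun X => by
        simpa using adj.map_derivedUnit_app_comp_derivedCounit_app q r W₁ W₂ eL eR hq hr hQ X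
      right_triangle := Localization.natTrans_ext L₂ W₂ fun Y => by
        simpa using adj.derivedUnit_app_comp_map_derivedCounit_app q r W₁ W₂ eL eR hq hr hR Y }

end Adjunction

end CategoryTheory

namespace ModelData

variable (M : ModelData C)

lemma W_Q_map {X Y : C} {f : X ⟶ Y} (hf : M.W f) : M.W (M.Q.map f) := by
  have := M.twoOutOfThree
  refine M.W.of_postcomp _ (M.q.app Y) (M.W_q Y) ?_
  rw [show M.Q.map f ≫ M.q.app Y = M.q.app X ≫ f from M.q.naturality f]
  exact M.W.comp_mem _ _ (M.W_q X) hf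

lemma W_R_map {X Y : C} {f : X ⟶ Y} (hf : M.W f) : M.W (M.R.map f) := by
  have := M.twoOutOfThree
  refine M.W.of_precomp (M.r.app X) _ (M.W_r X) ?_
  rw [show M.r.app X ≫ M.R.map f = f ≫ M.r.app Y from (M.r.naturality f).symm]
  exact M.W.comp_mem _ _ hf (M.W_r Y)

end ModelData

section

variable {M : ModelData C} {N : ModelData D} {E : Type*} [Category* E]

lemma PreservesCofibrant.map_map_Q_map_q {F : C ⥤ D} (hc : PreservesCofibrant M N F)
    (L : D ⥤ E) [L.IsLocalization N.W] (X : C) :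
    L.map (F.map (M.Q.map (M.q.app X))) = L.map (F.map (M.q.app (M.Q.obj X))) :=
  have (Y : C) : IsIso ((F ⋙ L).map (M.q.app (M.Q.obj Y))) :=
    Localization.inverts L N.W _ (hc.2 _ (M.cofibrant_Q _) (M.cofibrant_Q _) (M.W_q _))
  have : IsIso ((F ⋙ L).map (M.Q.map (M.q.app X))) :=
    Localization.inverts L N.W _
      (hc.2 _ (M.cofibrant_Q _) (M.cofibrant_Q _) (M.W_Q_map (M.W_q X)))
  NatTrans.map_map_app_eq_map_app_obj M.q (F ⋙ L) X

lemma PreservesFibrant.map_map_R_map_r {G : D ⥤ C} (hf : PreservesFibrant N M G)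
    (L : C ⥤ E) [L.IsLocalization M.W] (Y : D) :
    L.map (G.map (N.R.map (N.r.app Y))) = L.map (G.map (N.r.app (N.R.obj Y))) :=
  have (Z : D) : IsIso ((G ⋙ L).map (N.r.app (N.R.obj Z))) :=
    Localization.inverts L M.W _ (hf.2 _ (N.fibrant_R _) (N.fibrant_R _) (N.W_r _))
  have : IsIso ((G ⋙ L).map (N.R.map (N.r.app Y))) :=
    Localization.inverts L M.W _
      (hf.2 _ (N.fibrant_R _) (N.fibrant_R _) (N.W_R_map (N.W_r Y)))
  NatTrans.map_map_app_eq_map_app_obj' N.r (G ⋙ L) Y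

end

/-- If `F ⊣ G` is an adjunction between model categories in which `F` preserves
cofibrant objects and weak equivalences between cofibrant objects, and `G`
preserves fibrant objects and weak equivalences between fibrant objects (e.g. a
Quillen adjunction), then the left derived functor `LF` (induced by `F ∘ Q`) is
left adjoint to the right derived functor `RG` (induced by `G ∘ R`). -/
theorem derived_adjunction
    (M : ModelData C) (N : ModelData D) (F : C ⥤ D) (G : D ⥤ C)
    (adj : F ⊣ G)
    (hc : PreservesCofibrant M N F) (hf : PreservesFibrant N M G)
    (LF : M.W.Localization ⥤ N.W.Localization)
    (RG : N.W.Localization ⥤ M.W.Localization)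
    (eL : M.W.Q ⋙ LF ≅ (M.Q ⋙ F) ⋙ N.W.Q)
    (eR : N.W.Q ⋙ RG ≅ (N.R ⋙ G) ⋙ M.W.Q) :
    Nonempty (LF ⊣ RG) :=
  ⟨adj.derivedOfReplacement M.q N.r M.W N.W eL eR M.W_q N.W_r (hc.map_map_Q_map_q N.W.Q)
    (hf.map_map_R_map_r M.W.Q)⟩
end
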